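/- Let G be a group of orientation-preserving PL homeomorphisms of [0,1] and H ≤ G a subgroup. Suppose there is a closed interval I₀ ⊂ (0,1) with endpoints in X such that (a) H restricted to its I₀-preserving elements satisfies H|_{I₀} = G(I₀), and (b) H(I₀) is classful in G(I₀). Then H(I₀) = G(I₀). -/

import Mathlib

open Set

/-- An orientation-preserving piecewise linear homeomorphism of `[0,1]`,
viewed as a map of `ℝ` extended by the identity outside `[0,1]`. -/
def IsPLHomeo (f : ℝ → ℝ) : Prop :=
  Function.Bijective f ∧ StrictMono f ∧ f 0 = 0 ∧ f 1 = 1 ∧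
  (∀ x, x ∉ Icc (0 : ℝ) 1 → f x = x) ∧
  ∃ n : ℕ, ∃ x : Fin (n + 1) → ℝ, StrictMono x ∧ x 0 = 0 ∧ x (Fin.last n) = 1 ∧
    ∀ i : Fin n, ∃ c d : ℝ, ∀ t ∈ Icc (x i.castSucc) (x i.succ), f t = c * t + d

/-- The support of a map: the closure of its set of non-fixed points. -/
def Supp (f : ℝ → ℝ) : Set ℝ := closure {x | f x ≠ x}

/-- If `H|_{I₀} = G(I₀)` (restrictions of `I₀`-preserving elements of `H` coincide with
restrictions of elements of `G` supported in `I₀`) and `H(I₀)` is classful in `G(I₀)`,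
then `H(I₀) = G(I₀)`: every element of `G` supported in `I₀` agrees on `I₀` with an
element of `H` supported in `I₀`. -/
theorem restricted_classful_eq
    (G H : Subgroup (Equiv.Perm ℝ))
    (hGPL : ∀ g ∈ G, IsPLHomeo g)
    (hHG : H ≤ G)
    (a b : ℝ) (hab : a < b) (hI₀ : Icc a b ⊆ Ioo (0:ℝ) 1)
    -- (a) `G(I₀) ⊆ H|_{I₀}`
    (ha1 : ∀ f ∈ G, Supp ⇑f ⊆ Icc a b →
      ∃ h ∈ H, (⇑h) '' Icc a b = Icc a b ∧ ∀ x ∈ Icc a b, h x = f x)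
    -- (a) `H|_{I₀} ⊆ G(I₀)`
    (ha2 : ∀ h ∈ H, (⇑h) '' Icc a b = Icc a b →
      ∃ f ∈ G, Supp ⇑f ⊆ Icc a b ∧ ∀ x ∈ Icc a b, f x = h x)
    -- (b) `H(I₀)` is classful in `G(I₀)`
    (hb : ∀ f ∈ G, Supp ⇑f ⊆ Icc a b →
      ∃ g ∈ G, Supp ⇑g ⊆ Icc a b ∧ g * f * g⁻¹ ∈ H) :
    ∀ f ∈ G, Supp ⇑f ⊆ Icc a b → f ∈ H := by

  intro f hfG hfS
  obtain ⟨g, hgG, hgS, hH⟩ := hb f hfG hfS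
  obtain ⟨k, hkH, hkI, hkg⟩ := ha1 g hgG hgS
  have hfix : ∀ (p : Equiv.Perm ℝ), Supp ⇑p ⊆ Icc a b → ∀ x ∉ Icc a b, p x = x := by
    intro p hp x hx
    by_contra hne
    exact hx (hp (subset_closure hne))
  have hmap : ∀ (p : Equiv.Perm ℝ), Supp ⇑p ⊆ Icc a b → ∀ x ∈ Icc a b, p x ∈ Icc a b := by
    intro p hp x hx
    by_contra hpx
    have h1 := hfix p hp (p x) hpx
    exact hpx ((p.injective h1).symm ▸ hx)
  have key : f = k⁻¹ * (g * f * g⁻¹) * k := by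
    ext x
    simp only [Equiv.Perm.mul_apply]
    by_cases hx : x ∈ Icc a b
    · rw [hkg x hx, (by exact Equiv.symm_apply_apply g x : g⁻¹ (g x) = x), ← hkg (f x) (hmap f hfS x hx),
        (by exact Equiv.symm_apply_apply k (f x) : k⁻¹ (k (f x)) = f x)]
    · have hkx : k x ∉ Icc a b := by
        intro hkx
        rw [← hkI] at hkx
        obtain ⟨y, hy, hky⟩ := hkx
        exact hx (k.injective hky ▸ hy)
      have h1 : g⁻¹ (k x) = k x := by
        conv_lhs => rw [← hfix g hgS (k x) hkx]
        exact Equiv.symm_apply_apply g (k x)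
      rw [h1, hfix f hfS (k x) hkx, hfix g hgS (k x) hkx, (by exact Equiv.symm_apply_apply k x : k⁻¹ (k x) = x),
        hfix f hfS x hx]
  rw [key]
  exact H.mul_mem (H.mul_mem (H.inv_mem hkH) hH) hkH
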